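/- arXiv:1607.01563 — 6 statements merged into one kernel-verified Lean document; each statement's English description precedes it below -/
import Mathlib

section
/- Let ρ be a non-degenerate symmetric bilinear form on ℝ³ and T ∈ SO(ρ) (ρ-preserving with det T = 1). Suppose Tξ = −ξ for some vector ξ with ρ(ξ,ξ) ≠ 0. Then T admits a +1 eigenvector η with ρ(η,η) ≠ 0. -/
/-!
Every `ρ`-isometry `T` of odd dimension with `det T = 1` satisfies `det (T - 1) = 0`, so `T` has a
fixed vector `η ≠ 0`. It is `ρ`-orthogonal to the `(-1)`-eigenvector `ξ`.
If `η` were null, pick `w` with `ρ(η, w) ≠ 0`; then `ξ, η, w` is a basis, `ρ(η, ·)` reads off the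
`w`-coordinate of `T w` as `1`, and the matrix of `T` in this basis is triangular with diagonal
`-1, 1, 1`, contradicting `det T = 1`.
-/

open Matrix

variable {K : Type*} [Field K] {n : Type*} [Fintype n]

theorem Module.Basis.repr_mul_eq_of_forall_ne {V ι : Type*} [AddCommGroup V] [Module K V]
    [Fintype ι] (b : Basis ι K V) (φ : V →ₗ[K] K) {i : ι} (hφ : ∀ j ≠ i, φ (b j) = 0) (v : V) :
    b.repr v i * φ (b i) = φ v := by
  conv_rhs => rw [← b.sum_repr v]
  rw [map_sum, Finset.sum_eq_single i (fun j _ hj => by rw [map_smul, hφ j hj, smul_zero])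
    (by simp)]
  simp

theorem LinearMap.det_eq_neg_one_of_basis {V : Type*} [AddCommGroup V] [Module K V]
    (f : V →ₗ[K] V) (b : Module.Basis (Fin 3) K V) (h0 : f (b 0) = -b 0) (h1 : f (b 1) = b 1)
    (h2 : b.repr (f (b 2)) 2 = 1) : LinearMap.det f = -1 := by
  rw [← LinearMap.det_toMatrix b, det_fin_three]
  simp [LinearMap.toMatrix_apply, h0, h1, h2]

theorem linearIndependent_of_dotProduct_mulVec {P : Matrix n n K} {ξ η w : n → K}
    (hξξ : ξ ⬝ᵥ P *ᵥ ξ ≠ 0) (hξη : ξ ⬝ᵥ P *ᵥ η = 0) (hηξ : η ⬝ᵥ P *ᵥ ξ = 0)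
    (hηη : η ⬝ᵥ P *ᵥ η = 0) (hηw : η ⬝ᵥ P *ᵥ w ≠ 0) (hη : η ≠ 0) :
    LinearIndependent K ![ξ, η, w] := by
  rw [Fintype.linearIndependent_iff]
  intro g hg
  simp only [Fin.sum_univ_three, cons_val_zero, cons_val_one, cons_val_two, head_cons,
    tail_cons] at hg
  have hρ (u : n → K) :
      g 0 * (u ⬝ᵥ P *ᵥ ξ) + g 1 * (u ⬝ᵥ P *ᵥ η) + g 2 * (u ⬝ᵥ P *ᵥ w) = 0 := by
    simpa [mulVec_add, mulVec_smul] using congrArg (fun v => u ⬝ᵥ P *ᵥ v) hg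
  have h2 : g 2 = 0 := by simpa [hηξ, hηη, hηw] using hρ η
  have h0 : g 0 = 0 := by simpa [hξη, h2, hξξ] using hρ ξ
  have h1 : g 1 = 0 := by simpa [h0, h2, hη] using hg
  intro i
  fin_cases i <;> assumption

def Matrix.IsIsometry (P T : Matrix n n K) : Prop :=
  ∀ x y : n → K, T *ᵥ x ⬝ᵥ P *ᵥ (T *ᵥ y) = x ⬝ᵥ P *ᵥ y

namespace Matrix.IsIsometry

theorem dotProduct_mulVec_eq_zero_of_mulVec_eq_smul {P T : Matrix n n K} (hT : IsIsometry P T)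
    {x y : n → K} {a b : K} (hx : T *ᵥ x = a • x) (hy : T *ᵥ y = b • y) (hab : a * b ≠ 1) :
    x ⬝ᵥ P *ᵥ y = 0 := by
  have h := hT x y
  rw [hx, hy, mulVec_smul, dotProduct_smul, smul_dotProduct, smul_smul, smul_eq_mul] at h
  have : (a * b - 1) * (x ⬝ᵥ P *ᵥ y) = 0 := by linear_combination h
  simpa [sub_eq_zero, hab] using this

variable [DecidableEq n] {P T : Matrix n n K}

theorem transpose_mul_mul_self (hT : IsIsometry P T) : Tᵀ * P * T = P :=
  toBilin'.injective <| LinearMap.ext₂ fun x y => by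
    simpa [toBilin'_apply', Matrix.mul_assoc, ← mulVec_mulVec, dotProduct_mulVec,
      vecMul_transpose] using hT x y

theorem det_sub_one_eq_zero (hT : IsIsometry P T) (hP : P.det ≠ 0)
    (hdet : T.det ≠ (-1) ^ Fintype.card n) : (T - 1).det = 0 := by
  have key : (T - 1)ᵀ * P * T = -(P * (T - 1)) := by
    rw [transpose_sub, transpose_one, Matrix.sub_mul, Matrix.sub_mul, hT.transpose_mul_mul_self,
      Matrix.mul_sub, Matrix.one_mul, Matrix.mul_one, neg_sub]
  have hdet' := congrArg det key
  rw [det_mul, det_mul, det_transpose, det_neg, det_mul] at hdet'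
  have : (T - 1).det * P.det * (T.det - (-1) ^ Fintype.card n) = 0 := by
    linear_combination hdet'
  simpa [hP, sub_eq_zero, hdet] using this

theorem exists_mulVec_eq_self (hT : IsIsometry P T) (hP : P.det ≠ 0)
    (hdet : T.det ≠ (-1) ^ Fintype.card n) : ∃ η ≠ 0, T *ᵥ η = η := by
  obtain ⟨η, hη0, hη⟩ := exists_mulVec_eq_zero_iff.mpr (hT.det_sub_one_eq_zero hP hdet)
  exact ⟨η, hη0, by rwa [sub_mulVec, one_mulVec, sub_eq_zero] at hη⟩

end Matrix.IsIsometry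

theorem Matrix.IsIsometry.det_eq_neg_one [NeZero (2 : K)] {P T : Matrix (Fin 3) (Fin 3) K}
    (hT : IsIsometry P T) (hP : P.det ≠ 0) {ξ η : Fin 3 → K} (hξ : T *ᵥ ξ = -ξ)
    (hξξ : ξ ⬝ᵥ P *ᵥ ξ ≠ 0) (hη : T *ᵥ η = η) (hη0 : η ≠ 0) (hηη : η ⬝ᵥ P *ᵥ η = 0) :
    T.det = -1 := by
  have hneg : (-1 : K) ≠ 1 := fun h => (two_ne_zero : (2 : K) ≠ 0) (by linear_combination -h)
  have hξ' : T *ᵥ ξ = (-1 : K) • ξ := by rw [hξ, neg_one_smul]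
  have hη' : T *ᵥ η = (1 : K) • η := by rw [hη, one_smul]
  have hξη := hT.dotProduct_mulVec_eq_zero_of_mulVec_eq_smul hξ' hη' (by simpa using hneg)
  have hηξ := hT.dotProduct_mulVec_eq_zero_of_mulVec_eq_smul hη' hξ' (by simpa using hneg)
  obtain ⟨w, hηw⟩ := (nondegenerate_of_det_ne_zero hP).exists_not_ortho_of_ne_zero hη0
  let b := basisOfLinearIndependentOfCardEqFinrank
    (linearIndependent_of_dotProduct_mulVec hξξ hξη hηξ hηη hηw hη0) (by simp)
  have hb : ⇑b = ![ξ, η, w] := coe_basisOfLinearIndependentOfCardEqFinrank _ _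
  have hcoord : b.repr (T *ᵥ w) 2 = 1 := by
    have h := b.repr_mul_eq_of_forall_ne (toBilin' P η) (i := 2)
      (fun j hj => by fin_cases j <;> simp_all [toBilin'_apply']) (T *ᵥ w)
    have hTw : η ⬝ᵥ P *ᵥ (T *ᵥ w) = η ⬝ᵥ P *ᵥ w := by simpa [hη] using hT η w
    simp only [hb, toBilin'_apply', cons_val_two, tail_cons, head_cons, hTw] at h
    exact (mul_eq_right₀ hηw).mp h
  rw [← LinearMap.det_toLin']
  exact LinearMap.det_eq_neg_one_of_basis _ b (by simp [hb, hξ]) (by simp [hb, hη])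
    (by simpa [hb] using hcoord)

theorem stmt5_general (P T : Matrix (Fin 3) (Fin 3) ℝ)
    (hPnd : P.det ≠ 0)
    (hpres : ∀ x y : Fin 3 → ℝ,
      T.mulVec x ⬝ᵥ P.mulVec (T.mulVec y) = x ⬝ᵥ P.mulVec y)
    (hdet : T.det = 1)
    (ξ : Fin 3 → ℝ) (hξ : T.mulVec ξ = -ξ) (hnn : ξ ⬝ᵥ P.mulVec ξ ≠ 0) :
    ∃ η : Fin 3 → ℝ, T.mulVec η = η ∧ η ⬝ᵥ P.mulVec η ≠ 0 := by
  have hT : IsIsometry P T := hpres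
  obtain ⟨η, hη0, hη⟩ := hT.exists_mulVec_eq_self hPnd (by norm_num [hdet])
  refine ⟨η, hη, fun hηη => ?_⟩
  have := hT.det_eq_neg_one hPnd hξ hnn hη hη0 hηη
  norm_num [hdet] at this

/-- Let `ρ` (the symmetric matrix `P`, `det P ≠ 0`) be a non-degenerate symmetric
bilinear form on `ℝ³` and `T ∈ SO(ρ)`. If `Tξ = −ξ` for some non-null `ξ`, then
`T` admits a `+1` eigenvector which is non-null. -/
theorem stmt5 (P T : Matrix (Fin 3) (Fin 3) ℝ)
    (hPsym : P.IsSymm) (hPnd : P.det ≠ 0)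
    (hpres : ∀ x y : Fin 3 → ℝ,
      T.mulVec x ⬝ᵥ P.mulVec (T.mulVec y) = x ⬝ᵥ P.mulVec y)
    (hdet : T.det = 1)
    (ξ : Fin 3 → ℝ) (hξ : T.mulVec ξ = -ξ) (hnn : ξ ⬝ᵥ P.mulVec ξ ≠ 0) :
    ∃ η : Fin 3 → ℝ, T.mulVec η = η ∧ η ⬝ᵥ P.mulVec η ≠ 0 :=
  stmt5_general P T hPnd hpres hdet ξ hξ hnn
end

section
/- Let a > 0 and let Γ be the constant torsion-free Christoffel symbol on ℝ³ whose nonzero components (up to the symmetry Γ_{ij}^k = Γ_{ji}^k) in the standard basis e₁,e₂,e₃ are determined, via the complex basis f₁ = e₁ + i e₂, f₂ = e₁ − i e₂, f₃ = e₃, by Γ(f₁,f₃,f¹) = Γ(f₃,f₁,f¹) = a, Γ(f₂,f₃,f²) = Γ(f₃,f₂,f²) = a, Γ(f₁,f₂,f³) = Γ(f₂,f₁,f³) = a, Γ(f₃,f₃,f³) = (a²+1)/a. Then the Ricci tensor ρ_{jk} = Γ_{in}^i Γ_{jk}^n − Γ_{jn}^i Γ_{ik}^n, computed relative to the real basis {e₁,e₂,e₃},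 equals diag(a²+1, a²+1, 2). -/
/-!
Keep `c = Γ_{33}³` as a free parameter. The trace `Γ_{in}^i` is `(0, 0, 2a + c)`, and in `ρ₃₃`
the `c²` terms of `ρ₁` and `ρ₂` cancel, so the Ricci tensor is `diag(ac, ac, 2(ac − a²))`,
a polynomial in `a` and `c`. For `c = (a² + 1)/a` we have `ac = a² + 1`.
-/

open BigOperators

/-- The Ricci tensor of constant Christoffel symbols `Γ_{ij}^k`:
`ρ_{jk} = Γ_{in}^i Γ_{jk}^n − Γ_{jn}^i Γ_{ik}^n`. -/
def ricci (m : ℕ) (Γ : Fin m → Fin m → Fin m → ℝ) : Fin m → Fin m → ℝ :=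
  fun j k => ∑ i, ∑ n, (Γ i n i * Γ j k n - Γ j n i * Γ i k n)

/-- The torsion-free Christoffel symbol on `ℝ³` determined (via the complex basis
`f₁ = e₁ + ie₂`, `f₂ = e₁ − ie₂`, `f₃ = e₃`) by `Γ(f₁,f₃,f¹) = Γ(f₃,f₁,f¹) = a`,
`Γ(f₂,f₃,f²) = Γ(f₃,f₂,f²) = a`, `Γ(f₁,f₂,f³) = Γ(f₂,f₁,f³) = a`,
`Γ(f₃,f₃,f³) = (a²+1)/a`; in the real basis its nonzero components are
`Γ_{11}³ = Γ_{22}³ = a`, `Γ_{13}¹ = Γ_{31}¹ = a`, `Γ_{23}² = Γ_{32}² = a`,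
`Γ_{33}³ = (a²+1)/a`. -/
noncomputable def gammaA (a : ℝ) : Fin 3 → Fin 3 → Fin 3 → ℝ :=
  ![![![0, 0, a], ![0, 0, 0], ![a, 0, 0]],
    ![![0, 0, 0], ![0, 0, a], ![0, a, 0]],
    ![![a, 0, 0], ![0, a, 0], ![0, 0, (a ^ 2 + 1) / a]]]

def gammaAC (a c : ℝ) : Fin 3 → Fin 3 → Fin 3 → ℝ :=
  ![![![0, 0, a], ![0, 0, 0], ![a, 0, 0]],
    ![![0, 0, 0], ![0, 0, a], ![0, a, 0]],
    ![![a, 0, 0], ![0, a, 0], ![0, 0, c]]]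

theorem gammaA_eq_gammaAC (a : ℝ) : gammaA a = gammaAC a ((a ^ 2 + 1) / a) := rfl

theorem ricci_gammaAC (a c : ℝ) :
    ricci 3 (gammaAC a c) = ![![a * c, 0, 0], ![0, a * c, 0], ![0, 0, 2 * (a * c - a ^ 2)]] := by
  ext j k
  fin_cases j <;> fin_cases k <;> simp [ricci, gammaAC, Fin.sum_univ_succ] <;> ring

/-- For `a > 0`, the Ricci tensor of `gammaA a`, computed relative to the real
basis `{e₁,e₂,e₃}`, equals `diag(a²+1, a²+1, 2)`. -/
theorem stmt7 (a : ℝ) (ha : 0 < a) :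
    ∀ j k, ricci 3 (gammaA a) j k =
      ![![a ^ 2 + 1, 0, 0], ![0, a ^ 2 + 1, 0], ![0, 0, 2]] j k := by
  intro j k
  have hac : a * ((a ^ 2 + 1) / a) = a ^ 2 + 1 := mul_div_cancel₀ _ ha.ne'
  have h33 : 2 * (a ^ 2 + 1 - a ^ 2) = (2 : ℝ) := by ring
  rw [gammaA_eq_gammaAC, ricci_gammaAC, hac, h33]
end

section
/- Let Γ be the Christoffel symbol on ℝ³ of the previous context (Γ_{12}³ = a, Γ_{13}¹ = b, Γ_{23}² = c, Γ_{33}³ = d, symmetric in lower indices) and for α ≠ 0 let T_α ∈ GL(3,ℝ) be given by T_α e₁ = α e₁, T_α e₂ = α⁻¹ e₂, T_α e₃ = e₃. Then T_α Γ = Γ for every α ≠ 0, i.e. the isotropy group of Γ contains the non-compact group SO(1,1). In particular, choosing a,b,c,d with ad ≠ 0 and −b²+bd+c(−c+d) ≠ 0 of appropriate signs, there is a torsion-free Type A structure on ℝ³ with non-degenerate Ricci tensor whose symmetry group is non-compact. -/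
open Matrix BigOperators

/-- The Christoffel symbol on `ℝ³`, symmetric in its lower indices, with nonzero
components `Γ_{12}³ = Γ_{21}³ = a`, `Γ_{13}¹ = Γ_{31}¹ = b`, `Γ_{23}² = Γ_{32}² = c`,
`Γ_{33}³ = d`. -/
def gammaB (a b c d : ℝ) : Fin 3 → Fin 3 → Fin 3 → ℝ :=
  ![![![0, 0, 0], ![0, 0, a], ![b, 0, 0]],
    ![![0, 0, a], ![0, 0, 0], ![0, c, 0]],
    ![![b, 0, 0], ![0, c, 0], ![0, 0, d]]]

/-! A diagonal matrix acts on a `(2,1)`-tensor by rescaling each component separately; for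
`T_α = diag(α, α⁻¹, 1)` the component `Γ_{ij}^k` is multiplied by `α^ε`, where `ε` counts the
lower indices `1` minus the lower indices `2`, minus the same count for the upper index. Every
nonzero component of `gammaB` has `ε = 0`. -/

theorem Matrix.sum_diagonal_mul_diagonal_mul_diagonal {ι R : Type*} [Fintype ι] [DecidableEq ι]
    [CommSemiring R] (t s : ι → R) (Γ : ι → ι → ι → R) (i j k : ι) :
    ∑ p, ∑ q, ∑ r, diagonal t p i * diagonal t q j * diagonal s k r * Γ p q r =
      t i * t j * s k * Γ i j k := by
  simp [diagonal_apply, Finset.sum_ite_eq', Finset.sum_ite_eq]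

theorem gammaB_weight (a b c d : ℝ) {α : ℝ} (hα : α ≠ 0) (i j k : Fin 3) :
    ![α, α⁻¹, 1] i * ![α, α⁻¹, 1] j * ![α⁻¹, α, 1] k * gammaB a b c d i j k =
      gammaB a b c d i j k := by
  fin_cases i <;> fin_cases j <;> fin_cases k <;> simp [gammaB, hα]

/-- For every `α ≠ 0`, the element `T_α = diag(α, α⁻¹, 1)` of `SO(1,1) ⊆ GL(3,ℝ)`
fixes `gammaB a b c d` under the `(2,1)`-tensor action
`(TΓ)_{ij}^k = ∑ T_{pi} T_{qj} (T⁻¹)_{kr} Γ_{pq}^r`; i.e. the isotropy group of this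
torsion-free Type A structure contains the non-compact group `SO(1,1)`. -/
theorem stmt9 (a b c d α : ℝ) (hα : α ≠ 0) :
    let T : Matrix (Fin 3) (Fin 3) ℝ := Matrix.diagonal ![α, α⁻¹, 1]
    let Tinv : Matrix (Fin 3) (Fin 3) ℝ := Matrix.diagonal ![α⁻¹, α, 1]
    ∀ i j k, (∑ p, ∑ q, ∑ r, T p i * T q j * Tinv k r * gammaB a b c d p q r) =
      gammaB a b c d i j k := by
  intro T Tinv i j k
  rw [Matrix.sum_diagonal_mul_diagonal_mul_diagonal, gammaB_weight a b c d hα]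
end

section
/- Let Γ ∈ ℝ³⊗ℝ³⊗ℝ³ be a constant Christoffel symbol symmetric in its lower indices, with nonzero components only Γ_{22}¹ = c₅, Γ_{13}¹ = c₃+c₅, Γ_{23}¹ = c₄, Γ_{23}² = c₃, Γ_{33}¹ = c₆, Γ_{33}² = −2c₄, Γ_{33}³ = 2c₃ (and the symmetric counterparts). Then the Ricci tensor ρ_{jk} = Γ_{in}^i Γ_{jk}^n − Γ_{jn}^i Γ_{ik}^n satisfies ρ_{1k} = ρ_{k1} = 0 for all k; in particular ρ is degenerate. -/
open BigOperators

/-- The Christoffel symbol on `ℝ³`, symmetric in its lower indices, with nonzero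
components `Γ_{22}¹ = c₅`, `Γ_{13}¹ = c₃+c₅`, `Γ_{23}¹ = c₄`, `Γ_{23}² = c₃`,
`Γ_{33}¹ = c₆`, `Γ_{33}² = −2c₄`, `Γ_{33}³ = 2c₃`. -/
def gammaC (c₃ c₄ c₅ c₆ : ℝ) : Fin 3 → Fin 3 → Fin 3 → ℝ :=
  ![![![0, 0, 0], ![0, 0, 0], ![c₃ + c₅, 0, 0]],
    ![![0, 0, 0], ![c₅, 0, 0], ![c₄, c₃, 0]],
    ![![c₃ + c₅, 0, 0], ![c₄, c₃, 0], ![c₆, -2 * c₄, 2 * c₃]]]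

/-!
For constant Γ symmetric in its lower indices, ρ is symmetric (swap the summation indices in the
quadratic term). If moreover `Γ_{pk}^n = 0` for `n ≠ p`, then also `Γ_{ip}^i = Γ_{pi}^i = 0` for
`i ≠ p`, and both terms of `ρ_{pk}` collapse to `Γ_{pp}^p Γ_{pk}^p`, so they cancel. For `gammaC`
this holds with `p = 0` (the paper's index 1): its only component with a lower index 1 is
`Γ_{13}¹`.
-/

section ConstantChristoffel

variable {m : ℕ} {Γ : Fin m → Fin m → Fin m → ℝ} {p : Fin m}

theorem ricci_comm (hsymm : ∀ i j n, Γ i j n = Γ j i n) (j k : Fin m) :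
    ricci m Γ j k = ricci m Γ k j := by
  simp only [ricci, Finset.sum_sub_distrib, hsymm j k]
  congr 1
  rw [Finset.sum_comm]
  simp only [hsymm k, hsymm j, mul_comm]

theorem ricci_apply_eq_zero_of_slice (hsymm : ∀ i j n, Γ i j n = Γ j i n)
    (hslice : ∀ k n, n ≠ p → Γ p k n = 0) (k : Fin m) : ricci m Γ p k = 0 := by
  have htrace : ∑ i, ∑ n, Γ i n i * Γ p k n = Γ p p p * Γ p k p := by
    rw [Finset.sum_eq_single p]
    · exact Finset.sum_eq_single p (fun n _ hn => by rw [hslice k n hn, mul_zero]) (by simp)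
    · intro i _ hi
      refine Finset.sum_eq_zero fun n _ => ?_
      by_cases hn : n = p
      · rw [hn, hsymm, hslice i i hi, zero_mul]
      · rw [hslice k n hn, mul_zero]
    · simp
  have hcontr : ∑ i, ∑ n, Γ p n i * Γ i k n = Γ p p p * Γ p k p := by
    rw [Finset.sum_eq_single p]
    · rw [Finset.sum_eq_single p (fun n _ hn => by rw [hslice k n hn, mul_zero]) (by simp)]
    · exact fun i _ hi => Finset.sum_eq_zero fun n _ => by rw [hslice n i hi, zero_mul]
    · simp
  simp only [ricci, Finset.sum_sub_distrib, htrace, hcontr, sub_self]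

end ConstantChristoffel

theorem gammaC_symm (c₃ c₄ c₅ c₆ : ℝ) (i j n : Fin 3) :
    gammaC c₃ c₄ c₅ c₆ i j n = gammaC c₃ c₄ c₅ c₆ j i n := by
  fin_cases i <;> fin_cases j <;> rfl

theorem gammaC_zero_apply_of_ne (c₃ c₄ c₅ c₆ : ℝ) (k n : Fin 3) (hn : n ≠ 0) :
    gammaC c₃ c₄ c₅ c₆ 0 k n = 0 := by
  fin_cases k <;> fin_cases n <;> first | exact absurd rfl hn | rfl

/-- The Ricci tensor of `gammaC` satisfies `ρ_{1k} = ρ_{k1} = 0` for all `k`;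
in particular `ρ` is degenerate. -/
theorem stmt10 (c₃ c₄ c₅ c₆ : ℝ) :
    (∀ k, ricci 3 (gammaC c₃ c₄ c₅ c₆) 0 k = 0 ∧ ricci 3 (gammaC c₃ c₄ c₅ c₆) k 0 = 0) ∧
    (Matrix.of (ricci 3 (gammaC c₃ c₄ c₅ c₆))).det = 0 := by
  have hsymm := gammaC_symm c₃ c₄ c₅ c₆
  have hρ (k : Fin 3) : ricci 3 (gammaC c₃ c₄ c₅ c₆) 0 k = 0 :=
    ricci_apply_eq_zero_of_slice hsymm (gammaC_zero_apply_of_ne c₃ c₄ c₅ c₆) k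
  exact ⟨fun k => ⟨hρ k, ricci_comm hsymm k 0 ▸ hρ k⟩,
    Matrix.det_eq_zero_of_row_eq_zero 0 hρ⟩
end

section
/- Let Γ be the constant Christoffel symbol on ℝ³, symmetric in its lower indices, with nonzero independent components Γ_{12}³ = a³, Γ_{13}² = a², Γ_{23}¹ = a¹ (each Christoffel component containing each index 1,2,3 exactly once). Then its Ricci tensor is ρ = −2 diag(a²a³, a¹a³, a¹a²). -/
open BigOperators

/-- The Christoffel symbol on `ℝ³`, symmetric in its lower indices, with nonzero
components `Γ_{12}³ = Γ_{21}³ = a₃`, `Γ_{13}² = Γ_{31}² = a₂`, `Γ_{23}¹ = Γ_{32}¹ = a₁`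
(each component containing each index exactly once). -/
def gammaD (a₁ a₂ a₃ : ℝ) : Fin 3 → Fin 3 → Fin 3 → ℝ :=
  ![![![0, 0, 0], ![0, 0, a₃], ![0, a₂, 0]],
    ![![0, 0, a₃], ![0, 0, 0], ![a₁, 0, 0]],
    ![![0, a₂, 0], ![a₁, 0, 0], ![0, 0, 0]]]

/- A Christoffel component `Γ_{ij}^k` of `gammaD` vanishes unless `i, j, k` are distinct, so the
contraction `Γ_{in}^i` is zero and only the quadratic term `−Γ_{jn}^i Γ_{ik}^n` of the Ricci tensor
survives; in it, `ρ_{jj}` collects the two products of the components not involving `a_j`. -/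

theorem ricci_eq_neg_sum_of_contraction_eq_zero {m : ℕ} {Γ : Fin m → Fin m → Fin m → ℝ}
    (hΓ : ∀ n, ∑ i, Γ i n i = 0) (j k : Fin m) :
    ricci m Γ j k = -∑ i, ∑ n, Γ j n i * Γ i k n := by
  simp only [ricci, Finset.sum_sub_distrib]
  rw [Finset.sum_comm (f := fun i n => Γ i n i * Γ j k n)]
  simp [← Finset.sum_mul, hΓ]

theorem gammaD_contraction_eq_zero (a₁ a₂ a₃ : ℝ) (n : Fin 3) :
    ∑ i, gammaD a₁ a₂ a₃ i n i = 0 := by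
  fin_cases n <;> simp [gammaD, Fin.sum_univ_three]

/-- The Ricci tensor of `gammaD a₁ a₂ a₃` is `−2 diag(a₂a₃, a₁a₃, a₁a₂)`. -/
theorem stmt13 (a₁ a₂ a₃ : ℝ) :
    ∀ j k, ricci 3 (gammaD a₁ a₂ a₃) j k =
      ![![-2 * (a₂ * a₃), 0, 0], ![0, -2 * (a₁ * a₃), 0], ![0, 0, -2 * (a₁ * a₂)]] j k := by
  intro j k
  rw [ricci_eq_neg_sum_of_contraction_eq_zero (gammaD_contraction_eq_zero a₁ a₂ a₃)]
  fin_cases j <;> fin_cases k <;> simp [gammaD, Fin.sum_univ_three] <;> ring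
end

section
/- Let Γ be a constant Christoffel symbol on ℝ² whose Ricci tensor ρ_Γ is non-degenerate and indefinite (signature (1,1)), normalized so that in a hyperbolic basis ρ_Γ(e₁,e₁) = ρ_Γ(e₂,e₂) = 0, ρ_Γ(e₁,e₂) = 1. Let T_a ∈ SO(1,1) be given by T_a e₁ = a e₁, T_a e₂ = a⁻¹ e₂ (a ≠ 0). If T_a Γ = Γ and Γ ≠ 0, then a = 1. In particular the isotropy group of Γ inside this SO(1,1) is trivial. -/
open Matrix BigOperators

/-!
Under `T_a = diag(a, a⁻¹)` each component `Γ_{ij}^k` is simply rescaled, by `a ^ ε` with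
`ε = w i + w j - w k` and `w = (1, -1)`. This exponent is odd, so a nonzero component fixed by
`T_a` forces `a ^ ε = 1` with `ε` odd, which in an ordered field leaves only `a = 1`.
-/

lemma eq_one_of_zpow_eq_one_of_odd {K : Type*} [Field K] [LinearOrder K] [IsStrictOrderedRing K]
    {a : K} {n : ℤ} (hn : Odd n) (h : a ^ n = 1) : a = 1 := by
  have hn0 : n ≠ 0 := by rintro rfl; simp at hn
  rcases (zpow_eq_one_iff_of_ne_zero₀ hn0).1 h with h | ⟨-, h⟩
  · exact h
  · exact absurd h (Int.not_even_iff_odd.2 hn)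

lemma sum_diagonal_tensor_apply {ι R : Type*} [Fintype ι] [DecidableEq ι] [CommSemiring R]
    (d e : ι → R) (Γ : ι → ι → ι → R) (i j k : ι) :
    ∑ p, ∑ q, ∑ r, diagonal d p i * diagonal d q j * diagonal e k r * Γ p q r
      = d i * d j * e k * Γ i j k := by
  simp [diagonal_apply, ite_mul, Finset.sum_ite_eq, Finset.sum_ite_eq']

def hyperbolicWeight : Fin 2 → ℤ := ![1, -1]

lemma odd_hyperbolicWeight_add_sub (i j k : Fin 2) :
    Odd (hyperbolicWeight i + hyperbolicWeight j - hyperbolicWeight k) := by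
  fin_cases i <;> fin_cases j <;> fin_cases k <;> decide

lemma hyperbolic_factor_eq_zpow {K : Type*} [Field K] (a : K) (i j k : Fin 2) :
    ![a, a⁻¹] i * ![a, a⁻¹] j * ![a⁻¹, a] k
      = a ^ (hyperbolicWeight i + hyperbolicWeight j - hyperbolicWeight k) := by
  rcases eq_or_ne a 0 with rfl | ha
  · fin_cases i <;> fin_cases j <;> fin_cases k <;> simp [hyperbolicWeight]
  · fin_cases i <;> fin_cases j <;> fin_cases k <;> simp [hyperbolicWeight] <;> field_simp

theorem stmt16_general (Γ : Fin 2 → Fin 2 → Fin 2 → ℝ) (a : ℝ)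
    (hΓ : Γ ≠ 0)
    (hfix : let T : Matrix (Fin 2) (Fin 2) ℝ := Matrix.diagonal ![a, a⁻¹]
            let Tinv : Matrix (Fin 2) (Fin 2) ℝ := Matrix.diagonal ![a⁻¹, a]
            ∀ i j k, (∑ p, ∑ q, ∑ r, T p i * T q j * Tinv k r * Γ p q r) = Γ i j k) :
    a = 1 := by
  obtain ⟨i, j, k, hijk⟩ : ∃ i j k, Γ i j k ≠ 0 := by
    by_contra! h
    exact hΓ (funext₃ h)
  have hfixed := hfix i j k
  rw [sum_diagonal_tensor_apply, hyperbolic_factor_eq_zpow, mul_eq_right₀ hijk] at hfixed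
  exact eq_one_of_zpow_eq_one_of_odd (odd_hyperbolicWeight_add_sub i j k) hfixed

/-- Let `Γ` be a constant Christoffel symbol on `ℝ²` whose Ricci tensor is
non-degenerate indefinite, normalized hyperbolically (`ρ(e₁,e₁) = ρ(e₂,e₂) = 0`,
`ρ(e₁,e₂) = 1`). If `T_a = diag(a, a⁻¹) ∈ SO(1,1)` with `a > 0` fixes `Γ` under the
`(2,1)`-tensor action and `Γ ≠ 0`, then `a = 1`: the isotropy group of `Γ` inside
this `SO(1,1)` is trivial. -/
theorem stmt16 (Γ : Fin 2 → Fin 2 → Fin 2 → ℝ) (a : ℝ) (ha : 0 < a)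
    (hρ11 : ricci 2 Γ 0 0 = 0) (hρ22 : ricci 2 Γ 1 1 = 0) (hρ12 : ricci 2 Γ 0 1 = 1)
    (hΓ : Γ ≠ 0)
    (hfix : let T : Matrix (Fin 2) (Fin 2) ℝ := Matrix.diagonal ![a, a⁻¹]
            let Tinv : Matrix (Fin 2) (Fin 2) ℝ := Matrix.diagonal ![a⁻¹, a]
            ∀ i j k, (∑ p, ∑ q, ∑ r, T p i * T q j * Tinv k r * Γ p q r) = Γ i j k) :
    a = 1 :=
  stmt16_general Γ a hΓ hfix
end
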